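/- arXiv:1701.00265 — 3 statements merged into one kernel-verified Lean document; each statement's English description precedes it below -/
import Mathlib

section
/- For every real x > 0 one has ∫_0^∞ (Σ_{n∈ℤ} (−1)^n e^{−πn²t}) e^{−πx²t} dt = 1/(x·sinh(πx)), where the integrand's series converges absolutely for every t > 0 and the integral converges absolutely. -/
open Real MeasureTheory

/-!
Writing `p n = π (x² + n²)`, the integrand is `∑ₙ (-1)ⁿ e^{-p n t}`, and since `∑ₙ 1 / p n < ∞`
the series may be integrated termwise, giving `∑ₙ (-1)ⁿ / (π (x² + n²))`. This is the partial
fraction expansion of `1 / sinh`, obtained by evaluating at `θ = 0` the absolutely convergent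
Fourier series of the continuous `1`-periodic extension of `θ ↦ cosh (2πxθ)` on `[-1/2, 1/2]`,
whose `n`-th coefficient is `(-1)ⁿ x sinh (πx) / (π (x² + n²))`.
-/

theorem MeasureTheory.integrable_tsum_of_summable_integral_norm {α E ι : Type*}
    [MeasurableSpace α] {μ : Measure α} [NormedAddCommGroup E] [CompleteSpace E] [Countable ι]
    {F : ι → α → E} (hF_int : ∀ i, Integrable (F i) μ)
    (hF_sum : Summable fun i ↦ ∫ a, ‖F i a‖ ∂μ) :
    Integrable (fun a ↦ ∑' i, F i a) μ := by
  have hF_enorm : ∀ i, AEMeasurable (fun a ↦ ‖F i a‖ₑ) μ := fun i ↦ (hF_int i).1.enorm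
  have hlint : ∫⁻ a, ∑' i, ‖F i a‖ₑ ∂μ < ⊤ := by
    rw [lintegral_tsum hF_enorm]
    simp_rw [← ofReal_integral_norm_eq_lintegral_enorm (hF_int _)]
    rw [← ENNReal.ofReal_tsum_of_nonneg (fun i ↦ integral_nonneg fun a ↦ norm_nonneg _) hF_sum]
    exact ENNReal.ofReal_lt_top
  have hsum : ∀ᵐ a ∂μ, Summable fun i ↦ F i a := by
    filter_upwards [ae_lt_top' (AEMeasurable.tsum hF_enorm) hlint.ne] with a ha
    exact (tsum_enorm_ne_top_iff_summable_norm.1 ha.ne).of_norm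
  refine ⟨aestronglyMeasurable_of_tendsto_ae Filter.atTop
    (fun s ↦ Finset.aestronglyMeasurable_fun_sum s fun i _ ↦ (hF_int i).1)
    (hsum.mono fun a ha ↦ ha.hasSum), ?_⟩
  exact lt_of_le_of_lt (lintegral_mono fun a ↦ enorm_tsum_le_tsum_enorm) hlint

theorem integral_Ioi_exp_neg_mul {b : ℝ} (hb : 0 < b) :
    ∫ t in Set.Ioi 0, exp (-b * t) = 1 / b := by
  rw [integral_exp_mul_Ioi (neg_neg_of_pos hb), mul_zero, exp_zero, div_neg, neg_div, neg_neg]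

theorem integral_Ioi_norm_mul_exp_neg (a : ℝ) {p : ℝ} (hp : 0 < p) :
    ∫ t in Set.Ioi 0, ‖a * exp (-p * t)‖ = |a| / p := by
  simp_rw [norm_mul, Real.norm_eq_abs, abs_exp, integral_const_mul, integral_Ioi_exp_neg_mul hp,
    mul_one_div]

section TermwiseLaplace

variable {ι : Type*} [Countable ι] {a p : ι → ℝ}

theorem integrableOn_Ioi_tsum_mul_exp_neg (hp : ∀ i, 0 < p i)
    (ha : Summable fun i ↦ |a i| / p i) :
    IntegrableOn (fun t ↦ ∑' i, a i * exp (-p i * t)) (Set.Ioi 0) :=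
  integrable_tsum_of_summable_integral_norm
    (fun i ↦ (exp_neg_integrableOn_Ioi 0 (hp i)).const_mul (a i))
    (by simpa only [integral_Ioi_norm_mul_exp_neg _ (hp _)] using ha)

theorem integral_Ioi_tsum_mul_exp_neg (hp : ∀ i, 0 < p i)
    (ha : Summable fun i ↦ |a i| / p i) :
    ∫ t in Set.Ioi 0, ∑' i, a i * exp (-p i * t) = ∑' i, a i / p i := by
  rw [← integral_tsum_of_summable_integral_norm
    (fun i ↦ (exp_neg_integrableOn_Ioi 0 (hp i)).const_mul (a i))
    (by simpa only [integral_Ioi_norm_mul_exp_neg _ (hp _)] using ha)]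
  simp_rw [integral_const_mul, integral_Ioi_exp_neg_mul (hp _), mul_one_div]

end TermwiseLaplace

theorem hasSum_fourierCoeffOn_mul_cexp {T a : ℝ} (hT : 0 < T) {f : ℝ → ℂ}
    (hf : ContinuousOn f (Set.Icc a (a + T))) (hper : f a = f (a + T))
    (hsum : Summable (fourierCoeffOn (lt_add_of_pos_right a hT) f)) {x : ℝ}
    (hx : x ∈ Set.Ico a (a + T)) :
    HasSum (fun n : ℤ ↦ fourierCoeffOn (lt_add_of_pos_right a hT) f n *
      Complex.exp (2 * π * Complex.I * n * x / T)) (f x) := by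
  have := Fact.mk hT
  let F : C(AddCircle T, ℂ) := ⟨AddCircle.liftIco T a f, AddCircle.liftIco_continuous hper hf⟩
  have hcoeff : fourierCoeff F = fourierCoeffOn (lt_add_of_pos_right a hT) f :=
    funext (fourierCoeff_liftIco_eq f)
  have hF := has_pointwise_sum_fourier_series_of_summable (hcoeff ▸ hsum) (x : AddCircle T)
  rw [hcoeff] at hF
  simpa only [fourier_coe_apply, smul_eq_mul, F, ContinuousMap.coe_mk,
    AddCircle.liftIco_coe_apply hx] using hF

theorem integral_cexp_mul_neg_half_half {c : ℂ} (hc : c ≠ 0) :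
    ∫ θ in -(1/2 : ℝ)..1/2, Complex.exp (c * θ) = 2 * Complex.sinh (c / 2) / c := by
  rw [integral_exp_mul_complex hc, Complex.sinh]
  push_cast
  ring_nf

theorem fourierCoeffOn_cosh {x : ℝ} (hx : x ≠ 0) (n : ℤ) :
    fourierCoeffOn (lt_add_of_pos_right (-(1/2)) one_pos)
        (fun θ : ℝ ↦ Complex.cosh (2 * π * x * θ)) n =
      ((-1) ^ n * x * Real.sinh (π * x) / (π * (x ^ 2 + n ^ 2)) : ℝ) := by
  set c₁ : ℂ := 2 * π * (x - n * Complex.I)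
  set c₂ : ℂ := -(2 * π * (x + n * Complex.I))
  have hne₁ : (x : ℂ) - n * Complex.I ≠ 0 := fun h ↦ hx (by simpa using congrArg Complex.re h)
  have hne₂ : (x : ℂ) + n * Complex.I ≠ 0 := fun h ↦ hx (by simpa using congrArg Complex.re h)
  have h2π : (2 * π : ℂ) ≠ 0 := mul_ne_zero two_ne_zero (Complex.ofReal_ne_zero.mpr pi_ne_zero)
  have hintegrand (θ : ℝ) : fourier (-n) (θ : AddCircle (-(1/2) + 1 - -(1/2) : ℝ)) •
      Complex.cosh (2 * π * x * θ) = (Complex.exp (c₁ * θ) + Complex.exp (c₂ * θ)) / 2 := by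
    rw [fourier_coe_apply, smul_eq_mul, Complex.cosh, mul_div_assoc', mul_add, ← Complex.exp_add,
      ← Complex.exp_add]
    congr 3 <;> push_cast <;> ring
  have hc₁ : c₁ / 2 = π * x - n * (π * Complex.I) := by ring
  have hc₂ : c₂ / 2 = -(π * x) - n * (π * Complex.I) := by ring
  have hinterval : IntervalIntegrable (fun θ : ℝ ↦ Complex.exp (c₁ * θ)) volume (-(1/2)) (1/2) ∧
      IntervalIntegrable (fun θ : ℝ ↦ Complex.exp (c₂ * θ)) volume (-(1/2)) (1/2) :=
    ⟨(by fun_prop : Continuous _).intervalIntegrable _ _,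
      (by fun_prop : Continuous _).intervalIntegrable _ _⟩
  rw [fourierCoeffOn_eq_integral, intervalIntegral.integral_congr (fun θ _ ↦ hintegrand θ),
    show -(1/2 : ℝ) + 1 = 1/2 by norm_num, intervalIntegral.integral_div,
    intervalIntegral.integral_add hinterval.1 hinterval.2,
    integral_cexp_mul_neg_half_half (mul_ne_zero h2π hne₁),
    integral_cexp_mul_neg_half_half (neg_ne_zero.mpr (mul_ne_zero h2π hne₂)), hc₁, hc₂,
    Complex.sinh_antiperiodic.sub_int_mul_eq, Complex.sinh_antiperiodic.sub_int_mul_eq,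
    Complex.sinh_neg, Int.cast_negOnePow]
  have hx2 : (x : ℂ) ^ 2 + (n : ℂ) ^ 2 ≠ 0 := by
    exact_mod_cast (by positivity : (0 : ℝ) < x ^ 2 + n ^ 2).ne'
  simp only [Complex.real_smul]
  push_cast
  field_simp
  ring_nf
  rw [Complex.I_sq]
  ring

theorem summable_one_div_sq_add_sq (x : ℝ) : Summable fun n : ℤ ↦ 1 / (x ^ 2 + n ^ 2) := by
  refine (summable_one_div_int_pow.mpr one_lt_two).of_norm_bounded_eventually ?_
  filter_upwards [Filter.eventually_cofinite_ne 0] with n hn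
  rw [Real.norm_of_nonneg (by positivity)]
  gcongr
  exact le_add_of_nonneg_left (sq_nonneg x)

theorem summable_neg_one_zpow_div_sq_add_sq (x : ℝ) :
    Summable fun n : ℤ ↦ (-1) ^ n / (x ^ 2 + n ^ 2) :=
  (summable_one_div_sq_add_sq x).of_norm_bounded fun n ↦ by
    rw [norm_div, norm_zpow, norm_neg, norm_one, one_zpow, Real.norm_of_nonneg (by positivity)]

theorem hasSum_neg_one_zpow_div_sq_add_sq {x : ℝ} (hx : x ≠ 0) :
    HasSum (fun n : ℤ ↦ (-1) ^ n / (x ^ 2 + n ^ 2)) (π / (x * Real.sinh (π * x))) := by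
  obtain ⟨C, hC_def⟩ : ∃ C, C = x * Real.sinh (π * x) / π := ⟨_, rfl⟩
  have hC : C ≠ 0 := hC_def ▸
    div_ne_zero (mul_ne_zero hx (Real.sinh_ne_zero.mpr (by positivity))) pi_ne_zero
  have hcoeff : fourierCoeffOn (lt_add_of_pos_right (-(1/2)) one_pos)
      (fun θ : ℝ ↦ Complex.cosh (2 * π * x * θ)) =
        fun n : ℤ ↦ ((C * ((-1) ^ n / (x ^ 2 + n ^ 2)) : ℝ) : ℂ) := by
    ext n
    rw [fourierCoeffOn_cosh hx]
    congr 1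
    rw [hC_def]
    field_simp
  have hper : Complex.cosh (2 * π * x * (-(1/2) : ℝ)) =
      Complex.cosh (2 * π * x * (-(1/2) + 1 : ℝ)) := by
    rw [← Complex.cosh_neg]
    push_cast
    ring_nf
  have hsum := hasSum_fourierCoeffOn_mul_cexp (a := -(1/2))
    (f := fun θ : ℝ ↦ Complex.cosh (2 * π * x * θ)) one_pos (by fun_prop) hper
    (by simpa only [hcoeff, Complex.summable_ofReal]
      using (summable_neg_one_zpow_div_sq_add_sq x).mul_left C)
    (x := 0) (by norm_num)
  simp only [hcoeff, Complex.ofReal_zero, mul_zero, zero_div, Complex.exp_zero, mul_one,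
    Complex.cosh_zero] at hsum
  rw [← Complex.ofReal_one, Complex.hasSum_ofReal] at hsum
  have := hsum.mul_left C⁻¹
  simp only [inv_mul_cancel_left₀ hC, mul_one] at this
  rwa [hC_def, inv_div] at this

theorem summable_exp_neg_pi_mul_sq {t : ℝ} (ht : 0 < t) :
    Summable fun n : ℤ ↦ exp (-π * n ^ 2 * t) := by
  have := ((summable_jacobiTheta₂_term_iff 0 (t * Complex.I)).mpr (by simpa using ht)).norm
  simpa [norm_jacobiTheta₂_term] using this

/-- For every `x > 0`:
`∫_0^∞ (∑_{n∈ℤ} (-1)^n e^{-πn²t}) e^{-πx²t} dt = 1/(x sinh(πx))`, where the series converges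
absolutely for every `t > 0` and the integral converges absolutely. -/
theorem statement13 (x : ℝ) (hx : 0 < x) :
    (∀ t : ℝ, 0 < t →
      Summable (fun n : ℤ => |(-1 : ℝ) ^ n * Real.exp (-Real.pi * (n : ℝ) ^ 2 * t)|)) ∧
    IntegrableOn
      (fun t : ℝ => (∑' n : ℤ, (-1 : ℝ) ^ n * Real.exp (-Real.pi * (n : ℝ) ^ 2 * t)) *
        Real.exp (-Real.pi * x ^ 2 * t)) (Set.Ioi 0) ∧
    (∫ t in Set.Ioi (0 : ℝ),
        (∑' n : ℤ, (-1 : ℝ) ^ n * Real.exp (-Real.pi * (n : ℝ) ^ 2 * t)) *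
          Real.exp (-Real.pi * x ^ 2 * t)) =
      1 / (x * Real.sinh (Real.pi * x)) := by
  have hintegrand (t : ℝ) :
      (∑' n : ℤ, (-1 : ℝ) ^ n * exp (-π * n ^ 2 * t)) * exp (-π * x ^ 2 * t) =
        ∑' n : ℤ, (-1) ^ n * exp (-(π * (x ^ 2 + n ^ 2)) * t) := by
    rw [← tsum_mul_right]
    congr with n
    rw [mul_assoc, ← exp_add]
    ring_nf
  have hp (n : ℤ) : 0 < π * (x ^ 2 + n ^ 2) := by positivity
  have hsum : Summable fun n : ℤ ↦ |(-1 : ℝ) ^ n| / (π * (x ^ 2 + n ^ 2)) := by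
    simpa only [abs_neg_one_zpow, one_div, mul_inv, ← div_eq_inv_mul]
      using (summable_one_div_sq_add_sq x).div_const π
  refine ⟨fun t ht ↦ ?_, ?_, ?_⟩
  · simpa only [abs_mul, abs_neg_one_zpow, abs_exp, one_mul] using summable_exp_neg_pi_mul_sq ht
  · simpa only [hintegrand] using integrableOn_Ioi_tsum_mul_exp_neg hp hsum
  · simp_rw [hintegrand, integral_Ioi_tsum_mul_exp_neg hp hsum]
    have hkey := (hasSum_neg_one_zpow_div_sq_add_sq hx.ne').div_const π
    rw [div_div_cancel_left' pi_ne_zero] at hkey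
    simpa only [div_div, mul_comm _ π, one_div] using hkey.tsum_eq
end

section
/- Let k ≥ 0 and C > 0 be real numbers, and let g : [1, ∞) → ℝ be twice continuously differentiable with |g(x)| ≤ C·x^{−k} and |g''(x)| ≤ 1 for all x ≥ 1. Then |g'(x)| ≤ 2·√C·x^{−k/2} for all x ≥ 1. -/
open Real Set

/-
Taylor's formula with Lagrange remainder at `x` with step `h` gives
`h g'(x) = g(x + h) - g(x) - g''(ξ) h² / 2`, hence `|g'(x)| ≤ 2M / h + h / 2` whenever `|g| ≤ M`
at both ends and `|g''| ≤ 1`. Since `x ↦ C x^{-k}` is decreasing, `M = C x^{-k}` works, and the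
step `h = 2 √M = 2 √C x^{-k/2}` balances the two terms, giving `2 √M`.
-/

theorem iteratedDerivWithin_subset {𝕜 F : Type*} [NontriviallyNormedField 𝕜]
    [NormedAddCommGroup F] [NormedSpace 𝕜 F] {f : 𝕜 → F} {s t : Set 𝕜} {x : 𝕜} {n : ℕ}
    (st : s ⊆ t) (hs : UniqueDiffOn 𝕜 s) (ht : UniqueDiffOn 𝕜 t) (hf : ContDiffOn 𝕜 n f t)
    (hx : x ∈ s) : iteratedDerivWithin n f s x = iteratedDerivWithin n f t x := by
  simp only [iteratedDerivWithin_eq_iteratedFDerivWithin, iteratedFDerivWithin_subset st hs ht hf hx]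

theorem exists_taylor_two_Ici {f : ℝ → ℝ} {a x h : ℝ} (hf : ContDiffOn ℝ 2 f (Ici a))
    (hx : a ≤ x) (hh : 0 < h) :
    ∃ ξ ∈ Ioo x (x + h), f (x + h) =
      f x + derivWithin f (Ici a) x * h + iteratedDerivWithin 2 f (Ici a) ξ * h ^ 2 / 2 := by
  have hxh : x < x + h := lt_add_of_pos_right x hh
  have hsub : Icc x (x + h) ⊆ Ici a := fun y hy => hx.trans hy.1
  obtain ⟨ξ, hξ, hT⟩ := taylor_mean_remainder_lagrange_iteratedDeriv (n := 1) hxh.ne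
    (by rw [uIcc_of_le hxh.le]; exact hf.mono hsub)
  rw [uIoo_of_le hxh.le] at hξ
  have hξ_deriv : iteratedDerivWithin 2 f (Ici a) ξ = iteratedDeriv 2 f ξ :=
    iteratedDerivWithin_eq_iteratedDeriv (uniqueDiffOn_Ici a)
      (hf.contDiffAt (Ici_mem_nhds (hx.trans_lt hξ.1))) (hx.trans hξ.1.le)
  have hx_deriv : iteratedDerivWithin 1 f (Icc x (x + h)) x = derivWithin f (Ici a) x := by
    rw [iteratedDerivWithin_subset hsub (uniqueDiffOn_Icc hxh) (uniqueDiffOn_Ici a)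
      (hf.of_le one_le_two) (left_mem_Icc.2 hxh.le), iteratedDerivWithin_one]
  rw [uIcc_of_le hxh.le, taylor_within_apply] at hT
  simp only [Finset.sum_range_succ, Finset.sum_range_zero, iteratedDerivWithin_zero, hx_deriv,
    smul_eq_mul] at hT
  refine ⟨ξ, hξ, ?_⟩
  rw [hξ_deriv]
  norm_num at hT
  linarith

theorem abs_derivWithin_Ici_le {f : ℝ → ℝ} {a x h M B : ℝ} (hf : ContDiffOn ℝ 2 f (Ici a))
    (hx : a ≤ x) (hh : 0 < h) (hfx : |f x| ≤ M) (hfxh : |f (x + h)| ≤ M)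
    (hf'' : ∀ y ∈ Ioo x (x + h), |iteratedDerivWithin 2 f (Ici a) y| ≤ B) :
    |derivWithin f (Ici a) x| ≤ 2 * M / h + B * h / 2 := by
  obtain ⟨ξ, hξ, hT⟩ := exists_taylor_two_Ici hf hx hh
  have hξB := hf'' ξ hξ
  have hdiff : derivWithin f (Ici a) x * h =
      f (x + h) - f x - iteratedDerivWithin 2 f (Ici a) ξ * h ^ 2 / 2 := by linarith
  have hbound : |derivWithin f (Ici a) x| * h ≤ 2 * M + B * h ^ 2 / 2 :=
    calc |derivWithin f (Ici a) x| * h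
        = |f (x + h) - f x - iteratedDerivWithin 2 f (Ici a) ξ * h ^ 2 / 2| := by
          rw [← hdiff, abs_mul, abs_of_pos hh]
      _ ≤ |f (x + h)| + |f x| + |iteratedDerivWithin 2 f (Ici a) ξ| * h ^ 2 / 2 := by
          have := abs_sub (f (x + h) - f x) (iteratedDerivWithin 2 f (Ici a) ξ * h ^ 2 / 2)
          rw [abs_div, abs_mul, abs_of_nonneg (sq_nonneg h), abs_two] at this
          linarith [abs_sub (f (x + h)) (f x)]
      _ ≤ 2 * M + B * h ^ 2 / 2 := by gcongr; linarith
  rw [div_add_div _ _ hh.ne' two_ne_zero, le_div_iff₀ (by positivity)]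
  nlinarith

/-- If `g` is twice continuously differentiable on `[1,∞)` with `|g(x)| ≤ C x^{-k}` and
`|g''(x)| ≤ 1` there, then `|g'(x)| ≤ 2 √C x^{-k/2}` on `[1,∞)`. -/
theorem statement16 (k C : ℝ) (hk : 0 ≤ k) (hC : 0 < C) (g : ℝ → ℝ)
    (hg : ContDiffOn ℝ 2 g (Set.Ici 1))
    (hb : ∀ x : ℝ, 1 ≤ x → |g x| ≤ C * x ^ (-k))
    (hb2 : ∀ x : ℝ, 1 ≤ x → |iteratedDerivWithin 2 g (Set.Ici 1) x| ≤ 1) :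
    ∀ x : ℝ, 1 ≤ x → |derivWithin g (Set.Ici 1) x| ≤ 2 * Real.sqrt C * x ^ (-(k / 2)) := by
  intro x hx
  have hx0 : 0 < x := one_pos.trans_le hx
  set s := √C * x ^ (-(k / 2))
  have hs : 0 < s := mul_pos (sqrt_pos.2 hC) (rpow_pos_of_pos hx0 _)
  have hs_sq : s ^ 2 = C * x ^ (-k) := by
    rw [mul_pow, sq_sqrt hC.le, ← rpow_natCast, ← rpow_mul hx0.le]
    norm_num
  have hg_step : |g (x + 2 * s)| ≤ s ^ 2 := by
    rw [hs_sq]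
    exact (hb _ (by linarith)).trans <| mul_le_mul_of_nonneg_left
      (rpow_le_rpow_of_nonpos hx0 (by linarith) (neg_nonpos.2 hk)) hC.le
  have := abs_derivWithin_Ici_le hg hx (by positivity) (hs_sq ▸ hb x hx) hg_step
    (fun y hy => hb2 y (hx.trans hy.1.le))
  calc |derivWithin g (Ici 1) x| ≤ 2 * s ^ 2 / (2 * s) + 1 * (2 * s) / 2 := this
    _ = 2 * √C * x ^ (-(k / 2)) := by field_simp; ring
end

section
/- Let m be a nonnegative integer and let g : ℍ → ℂ be a holomorphic function on the upper half-plane ℍ = {z ∈ ℂ : Im z > 0} satisfying g(z+2) = g(z) for all z ∈ ℍ, admitting an absolutely convergent expansion g(z) = e^{−iπmz} + Σ_{n=0}^∞ c_n e^{iπnz} valid for all z ∈ ℍ, and such that there exist constants C, c > 0 with |g(z)| ≤ C·exp(−c/Im z) for all z ∈ ℍ with |z − 1| ≤ 1/2 or |z + 1| ≤ 1/2. Then for every real x with x² > m one has (1/2)·∫_γ g(z) e^{iπx²z} dz = sin(πx²)·∫_0^∞ g(1+it) e^{−πx²t} dt, where γ is the semicircular contour from −1 to 1 and the integral on the right converges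 absolutely. -/
/-!
Put `h z = g z e^{iπx²z}`. The expansion of `g` makes `h` decay like `e^{-π(x² - m) Im z}`
uniformly on every half-plane `Im z ≥ σ > 0`, and the decay of `g` at the cusps `±1` keeps `h`
bounded near them. Hence the vertical integral `V w = ∫₀^∞ h (w + is) ds` satisfies `V' = i h` on
the upper half-plane (differentiate under the integral sign, then integrate `h'` up the ray) and
extends continuously to `±1`. So `-i V` is a primitive of `h` along the semicircle and
`∫_γ h = -i (V 1 - V (-1))`; by `2`-periodicity `V (±1) = e^{±iπx²} ∫₀^∞ g(1+it) e^{-πx²t} dt`.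
-/

open Real Complex MeasureTheory

/-- The contour integral of `h` over the semicircle `{e^{iθ} : 0 < θ < π}` in the upper
half-plane, traversed from `-1` to `1`, parametrized by `z(t) = e^{i(π - t)}`, `t ∈ [0, π]`. -/
noncomputable def semicircleIntegral (h : ℂ → ℂ) : ℂ :=
  ∫ t in (0:ℝ)..Real.pi,
    h (Complex.exp (Complex.I * ((Real.pi : ℂ) - t))) *
      (-Complex.I * Complex.exp (Complex.I * ((Real.pi : ℂ) - t)))

open Set Filter Topology Metric

lemma norm_cexp_ofReal_mul_I_mul (b : ℝ) (z : ℂ) : ‖cexp (b * I * z)‖ = rexp (-(b * z.im)) := by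
  rw [norm_exp]
  congr 1
  simp [mul_re, mul_im]

lemma im_sub_le_im_of_dist_le {z w : ℂ} {r : ℝ} (h : dist w z ≤ r) : z.im - r ≤ w.im := by
  have := (abs_le.1 ((abs_im_le_norm (w - z)).trans ((Complex.dist_eq w z).ge.trans h))).1
  rw [sub_im] at this
  linarith

@[simp]
lemma im_add_ofReal_mul_I (w : ℂ) (s : ℝ) : (w + s * I).im = w.im + s := by simp

lemma continuousOn_comp_ray {f : ℂ → ℂ} (hc : ContinuousOn f {z | 0 < z.im}) {w : ℂ}
    (hw : 0 ≤ w.im) : ContinuousOn (fun s : ℝ => f (w + s * I)) (Ioi 0) :=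
  hc.comp (by fun_prop) fun s (hs : (0 : ℝ) < s) => by
    show 0 < (w + s * I).im
    rw [im_add_ofReal_mul_I]
    linarith

lemma integrableOn_ray_of_norm_le {f : ℂ → ℂ} {a B : ℝ} (ha : 0 < a)
    (hc : ContinuousOn f {z | 0 < z.im}) {w : ℂ} (hw : 0 ≤ w.im)
    (hB : ∀ s : ℝ, 0 < s → ‖f (w + s * I)‖ ≤ B * rexp (-(a * s))) :
    IntegrableOn (fun s : ℝ => f (w + s * I)) (Ioi 0) := by
  refine Integrable.mono' ((exp_neg_integrableOn_Ioi 0 ha).const_mul B)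
    ((continuousOn_comp_ray hc hw).aestronglyMeasurable measurableSet_Ioi) ?_
  filter_upwards [self_mem_ae_restrict measurableSet_Ioi] with s hs
  simpa only [neg_mul] using hB s hs

-- The rate `a` may be negative: `g` itself only satisfies `HasExpDecay (-(π * m)) g`.
def HasExpDecay (a : ℝ) (f : ℂ → ℂ) : Prop :=
  ∀ σ > 0, ∃ K ≥ 0, ∀ z : ℂ, σ ≤ z.im → ‖f z‖ ≤ K * rexp (-(a * z.im))

section ExpDecay

variable {f : ℂ → ℂ} {a : ℝ}

lemma HasExpDecay.mul_cexp (hf : HasExpDecay a f) (b : ℝ) :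
    HasExpDecay (a + b) (fun z => f z * cexp (b * I * z)) := by
  intro σ hσ
  obtain ⟨K, hK, hbound⟩ := hf σ hσ
  refine ⟨K, hK, fun z hz => ?_⟩
  rw [norm_mul, norm_cexp_ofReal_mul_I_mul, add_mul, neg_add, Real.exp_add, ← mul_assoc]
  exact mul_le_mul_of_nonneg_right (hbound z hz) (Real.exp_pos _).le

lemma HasExpDecay.deriv_of_differentiableOn (hf : HasExpDecay a f) (ha : 0 ≤ a)
    (hd : DifferentiableOn ℂ f {z | 0 < z.im}) : HasExpDecay a (deriv f) := by
  intro σ hσ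
  obtain ⟨K, hK, hbound⟩ := hf (σ / 2) (half_pos hσ)
  refine ⟨K * rexp (a * (σ / 2)) / (σ / 2), by positivity, fun z hz => ?_⟩
  have him : ∀ w ∈ closedBall z (σ / 2), z.im - σ / 2 ≤ w.im := fun w hw =>
    im_sub_le_im_of_dist_le hw
  have hsub : closure (ball z (σ / 2)) ⊆ {w | 0 < w.im} := by
    rw [closure_ball z (half_pos hσ).ne']
    intro w hw
    have := him w hw
    show 0 < w.im
    linarith
  calc ‖deriv f z‖ ≤ K * rexp (-(a * (z.im - σ / 2))) / (σ / 2) := by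
        refine norm_deriv_le_of_forall_mem_sphere_norm_le (half_pos hσ)
          (hd.mono hsub).diffContOnCl fun w hw => ?_
        have hw' := him w (sphere_subset_closedBall hw)
        refine (hbound w (by linarith)).trans ?_
        gcongr
    _ = K * rexp (a * (σ / 2)) / (σ / 2) * rexp (-(a * z.im)) := by
        rw [show -(a * (z.im - σ / 2)) = a * (σ / 2) + -(a * z.im) by ring, Real.exp_add]
        ring

lemma HasExpDecay.exists_norm_ray_le (hf : HasExpDecay a f) (ha : 0 ≤ a) {σ : ℝ}
    (hσ : 0 < σ) :
    ∃ K, ∀ w : ℂ, σ ≤ w.im → ∀ s : ℝ, 0 ≤ s → ‖f (w + s * I)‖ ≤ K * rexp (-(a * s)) := by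
  obtain ⟨K, hK, hbound⟩ := hf σ hσ
  refine ⟨K, fun w hw s hs => ?_⟩
  refine (hbound _ (by rw [im_add_ofReal_mul_I]; linarith)).trans ?_
  gcongr
  rw [im_add_ofReal_mul_I]
  nlinarith

lemma HasExpDecay.integrableOn_ray (hf : HasExpDecay a f) (ha : 0 < a)
    (hc : ContinuousOn f {z | 0 < z.im}) {w : ℂ} (hw : 0 < w.im) :
    IntegrableOn (fun s : ℝ => f (w + s * I)) (Ioi 0) := by
  obtain ⟨K, hK⟩ := hf.exists_norm_ray_le ha.le hw
  exact integrableOn_ray_of_norm_le ha hc hw.le fun s hs => hK w le_rfl s hs.le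

lemma HasExpDecay.tendsto_ray (hf : HasExpDecay a f) (ha : 0 < a) {w : ℂ} (hw : 0 < w.im) :
    Tendsto (fun s : ℝ => f (w + s * I)) atTop (𝓝 0) := by
  obtain ⟨K, hK⟩ := hf.exists_norm_ray_le ha.le hw
  have hlim : Tendsto (fun s : ℝ => K * rexp (-(a * s))) atTop (𝓝 0) := by
    simpa using (Real.tendsto_exp_atBot.comp (tendsto_neg_atTop_atBot.comp
      (Tendsto.const_mul_atTop ha tendsto_id))).const_mul K
  exact squeeze_zero_norm' ((eventually_ge_atTop 0).mono fun s hs => hK w le_rfl s hs) hlim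


lemma HasExpDecay.exists_norm_ray_le_of_cusp (hf : HasExpDecay a f) (ha : 0 ≤ a) {z₀ : ℂ}
    {r C : ℝ} (hr : 0 < r) (hcusp : ∀ z : ℂ, 0 < z.im → ‖z - z₀‖ ≤ r → ‖f z‖ ≤ C) :
    ∃ B, ∀ w : ℂ, 0 ≤ w.im → ‖w - z₀‖ ≤ r / 2 →
      ∀ s : ℝ, 0 < s → ‖f (w + s * I)‖ ≤ B * rexp (-(a * s)) := by
  obtain ⟨K, hK, hbound⟩ := hf (r / 2) (half_pos hr)
  refine ⟨|C| * rexp (a * (r / 2)) + K, fun w hw hwz s hs => ?_⟩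
  have him := im_add_ofReal_mul_I w s
  -- below height `r / 2` the ray is still in the disc around the cusp
  rcases le_or_gt s (r / 2) with hsr | hsr
  · have hnear : ‖w + s * I - z₀‖ ≤ r :=
      calc ‖w + s * I - z₀‖ = ‖(w - z₀) + s * I‖ := by ring_nf
        _ ≤ ‖w - z₀‖ + s := by
          refine (norm_add_le _ _).trans_eq ?_
          rw [norm_mul, norm_I, mul_one, norm_real, Real.norm_of_nonneg hs.le]
        _ ≤ r := by linarith
    calc ‖f (w + s * I)‖ ≤ |C| * rexp (a * (r / 2)) * rexp (-(a * s)) := by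
          rw [mul_assoc, ← Real.exp_add]
          refine (hcusp _ (by rw [him]; linarith) hnear).trans ((le_abs_self C).trans ?_)
          refine le_mul_of_one_le_right (abs_nonneg C) (Real.one_le_exp ?_)
          nlinarith
      _ ≤ _ := by gcongr; linarith
  · calc ‖f (w + s * I)‖ ≤ K * rexp (-(a * (w + s * I).im)) :=
          hbound _ (by rw [him]; linarith)
      _ ≤ K * rexp (-(a * s)) := by gcongr; rw [him]; nlinarith
      _ ≤ _ := by gcongr; exact le_add_of_nonneg_left (by positivity)

end ExpDecay

noncomputable def verticalIntegral (f : ℂ → ℂ) (w : ℂ) : ℂ := ∫ s in Ioi (0 : ℝ), f (w + s * I)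

section VerticalIntegral

variable {f : ℂ → ℂ} {a : ℝ}

lemma HasExpDecay.verticalIntegral_deriv (hf : HasExpDecay a f) (ha : 0 < a)
    (hd : DifferentiableOn ℂ f {z | 0 < z.im}) {w : ℂ} (hw : 0 < w.im) :
    verticalIntegral (deriv f) w = I * f w := by
  have hderiv : ∀ s ∈ Ici (0 : ℝ),
      HasDerivAt (fun s : ℝ => f (w + s * I)) (deriv f (w + s * I) * I) s := by
    intro s (hs : 0 ≤ s)
    have hinner : HasDerivAt (fun s : ℝ => w + s * I) I s := by
      simpa using (((hasDerivAt_id (s : ℂ)).mul_const I).const_add w).comp_ofReal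
    refine (hd.differentiableAt ((isOpen_im_gt 0).mem_nhds ?_)).hasDerivAt.comp s hinner
    show 0 < (w + s * I).im
    rw [im_add_ofReal_mul_I]
    linarith
  have hint := ((hf.deriv_of_differentiableOn ha.le hd).integrableOn_ray ha
    (hd.deriv (isOpen_im_gt 0)).continuousOn hw).mul_const I
  have hFTC := integral_Ioi_of_hasDerivAt_of_tendsto' hderiv hint (hf.tendsto_ray ha hw)
  rw [integral_mul_const, zero_sub, ofReal_zero, zero_mul, add_zero] at hFTC
  unfold verticalIntegral
  linear_combination (-I) * hFTC + (∫ s in Ioi (0 : ℝ), deriv f (w + s * I)) * I_sq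

lemma HasExpDecay.hasDerivAt_verticalIntegral (hf : HasExpDecay a f) (ha : 0 < a)
    (hd : DifferentiableOn ℂ f {z | 0 < z.im}) {w : ℂ} (hw : 0 < w.im) :
    HasDerivAt (verticalIntegral f) (I * f w) w := by
  have hball : ∀ z ∈ ball w (w.im / 2), w.im / 2 ≤ z.im := fun z hz => by
    have := im_sub_le_im_of_dist_le (le_of_lt hz); linarith
  obtain ⟨K, hK⟩ := (hf.deriv_of_differentiableOn ha.le hd).exists_norm_ray_le ha.le (half_pos hw)
  have hmeas : ∀ᶠ z in 𝓝 w, AEStronglyMeasurable (fun s : ℝ => f (z + s * I))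
      (volume.restrict (Ioi 0)) := by
    filter_upwards [ball_mem_nhds w (half_pos hw)] with z hz
    exact (continuousOn_comp_ray hd.continuousOn (by linarith [hball z hz])).aestronglyMeasurable
      measurableSet_Ioi
  have hmain := hasDerivAt_integral_of_dominated_loc_of_deriv_le
    (F := fun z (s : ℝ) => f (z + s * I)) (F' := fun z (s : ℝ) => deriv f (z + s * I))
    (bound := fun s => K * rexp (-(a * s))) (ball_mem_nhds w (half_pos hw)) hmeas
    (hf.integrableOn_ray ha hd.continuousOn hw)
    ((continuousOn_comp_ray (hd.deriv (isOpen_im_gt 0)).continuousOn hw.le).aestronglyMeasurable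
      measurableSet_Ioi)
    (by
      filter_upwards [self_mem_ae_restrict measurableSet_Ioi] with s (hs : 0 < s) z hz
      exact hK z (hball z hz) s hs.le)
    (by simpa only [neg_mul] using (exp_neg_integrableOn_Ioi 0 ha).const_mul K)
    (by
      filter_upwards [self_mem_ae_restrict measurableSet_Ioi] with s (hs : 0 < s) z hz
      refine HasDerivAt.comp_add_const z _
        (hd.differentiableAt ((isOpen_im_gt 0).mem_nhds ?_)).hasDerivAt
      show 0 < (z + s * I).im
      rw [im_add_ofReal_mul_I]
      linarith [hball z hz])
  have hvalue : ∫ s in Ioi (0 : ℝ), deriv f (w + s * I) = I * f w :=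
    hf.verticalIntegral_deriv ha hd hw
  exact hvalue ▸ hmain.2

lemma HasExpDecay.integrableOn_ray_of_cusp (hf : HasExpDecay a f) (ha : 0 < a)
    (hc : ContinuousOn f {z | 0 < z.im}) {z₀ : ℂ} (hz₀ : 0 ≤ z₀.im) {r C : ℝ} (hr : 0 < r)
    (hcusp : ∀ z : ℂ, 0 < z.im → ‖z - z₀‖ ≤ r → ‖f z‖ ≤ C) :
    IntegrableOn (fun s : ℝ => f (z₀ + s * I)) (Ioi 0) := by
  obtain ⟨B, hB⟩ := hf.exists_norm_ray_le_of_cusp ha.le hr hcusp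
  exact integrableOn_ray_of_norm_le ha hc hz₀ (hB z₀ hz₀ (by simpa using (half_pos hr).le))

lemma HasExpDecay.continuousWithinAt_verticalIntegral (hf : HasExpDecay a f) (ha : 0 < a)
    (hc : ContinuousOn f {z | 0 < z.im}) {z₀ : ℂ} (hz₀ : 0 ≤ z₀.im) {r C : ℝ} (hr : 0 < r)
    (hcusp : ∀ z : ℂ, 0 < z.im → ‖z - z₀‖ ≤ r → ‖f z‖ ≤ C) :
    ContinuousWithinAt (verticalIntegral f) {z | 0 ≤ z.im} z₀ := by
  obtain ⟨B, hB⟩ := hf.exists_norm_ray_le_of_cusp ha.le hr hcusp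
  have hnear : ∀ᶠ w in 𝓝[{z | 0 ≤ z.im}] z₀, 0 ≤ w.im ∧ ‖w - z₀‖ ≤ r / 2 := by
    filter_upwards [self_mem_nhdsWithin,
      mem_nhdsWithin_of_mem_nhds (closedBall_mem_nhds z₀ (half_pos hr))] with w hw hwz
    exact ⟨hw, mem_closedBall_iff_norm.1 hwz⟩
  refine continuousWithinAt_of_dominated (bound := fun s => B * rexp (-(a * s))) ?_ ?_
    (by simpa only [neg_mul] using (exp_neg_integrableOn_Ioi 0 ha).const_mul B) ?_
  · filter_upwards [hnear] with w hw
    exact (continuousOn_comp_ray hc hw.1).aestronglyMeasurable measurableSet_Ioi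
  · filter_upwards [hnear] with w hw
    filter_upwards [self_mem_ae_restrict measurableSet_Ioi] with s hs
    exact hB w hw.1 hw.2 s hs
  · filter_upwards [self_mem_ae_restrict measurableSet_Ioi] with s (hs : 0 < s)
    have hpt : z₀ + s * I ∈ {z : ℂ | 0 < z.im} := by
      show 0 < (z₀ + s * I).im
      rw [im_add_ofReal_mul_I]
      linarith
    exact (ContinuousAt.comp (f := fun w : ℂ => w + s * I)
      (hc.continuousAt ((isOpen_im_gt 0).mem_nhds hpt))
      (continuous_add_const _).continuousAt).continuousWithinAt

end VerticalIntegral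

noncomputable def semicircle (t : ℝ) : ℂ := cexp (I * ((π : ℂ) - t))

lemma semicircle_eq (t : ℝ) : semicircle t = cexp (((π - t : ℝ) : ℂ) * I) := by
  rw [semicircle, mul_comm]
  push_cast
  rfl

lemma semicircle_im (t : ℝ) : (semicircle t).im = Real.sin t := by
  rw [semicircle_eq, exp_ofReal_mul_I_im, Real.sin_pi_sub]

lemma norm_semicircle (t : ℝ) : ‖semicircle t‖ = 1 := by
  rw [semicircle_eq, norm_exp_ofReal_mul_I]

lemma semicircle_zero : semicircle 0 = -1 := by
  simp [semicircle, mul_comm I, exp_pi_mul_I]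

lemma semicircle_pi : semicircle π = 1 := by
  simp [semicircle]

lemma semicircle_im_pos {t : ℝ} (ht : t ∈ Ioo 0 π) : 0 < (semicircle t).im := by
  rw [semicircle_im]
  exact Real.sin_pos_of_pos_of_lt_pi ht.1 ht.2

lemma hasDerivAt_semicircle (t : ℝ) : HasDerivAt semicircle (-I * semicircle t) t := by
  have h : HasDerivAt (fun z : ℂ => I * ((π : ℂ) - z)) (-I) t := by
    simpa using ((hasDerivAt_id (t : ℂ)).const_sub (π : ℂ)).const_mul I
  exact h.cexp.comp_ofReal.congr_deriv (mul_comm _ _)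

lemma continuous_semicircle : Continuous semicircle := by
  unfold semicircle
  fun_prop

lemma norm_semicircle_sub_one_le (t : ℝ) : ‖semicircle t - 1‖ ≤ |π - t| := by
  simpa [semicircle] using norm_exp_I_mul_ofReal_sub_one_le (x := π - t)

lemma norm_semicircle_sub_neg_one_le (t : ℝ) : ‖semicircle t - -1‖ ≤ |t| := by
  have h : semicircle t - -1 = -(cexp (I * ((-t : ℝ) : ℂ)) - 1) := by
    rw [semicircle, mul_sub, Complex.exp_sub, mul_comm I, exp_pi_mul_I]
    push_cast
    rw [mul_neg, Complex.exp_neg]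
    field_simp
    ring
  rw [h, norm_neg]
  simpa using norm_exp_I_mul_ofReal_sub_one_le (x := -t)

lemma intervalIntegrable_semicircle {f : ℂ → ℂ} (hc : ContinuousOn f {z | 0 < z.im})
    {r C : ℝ} (hr : 0 < r) (h₁ : ∀ z : ℂ, 0 < z.im → ‖z - 1‖ ≤ r → ‖f z‖ ≤ C)
    (h₂ : ∀ z : ℂ, 0 < z.im → ‖z - -1‖ ≤ r → ‖f z‖ ≤ C) :
    IntervalIntegrable (fun t => f (semicircle t) * (-I * semicircle t)) volume 0 π := by
  have hcont : ContinuousOn (fun t => f (semicircle t) * (-I * semicircle t)) (Ioo 0 π) :=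
    (hc.comp continuous_semicircle.continuousOn fun t ht => semicircle_im_pos ht).mul
      (continuous_const.mul continuous_semicircle).continuousOn
  obtain ⟨M, hM⟩ := isCompact_Icc.exists_bound_of_continuousOn
    (hcont.mono (Icc_subset_Ioo hr (by linarith) : Icc r (π - r) ⊆ Ioo 0 π))
  rw [intervalIntegrable_iff_integrableOn_Ioo_of_le pi_pos.le]
  refine Integrable.mono' (integrable_const (max C M))
    (hcont.aestronglyMeasurable measurableSet_Ioo) ?_
  filter_upwards [self_mem_ae_restrict measurableSet_Ioo] with t ht
  by_cases hmid : t ∈ Icc r (π - r)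
  · exact (hM t hmid).trans (le_max_right _ _)
  rw [norm_mul, norm_mul, norm_neg, norm_I, norm_semicircle, one_mul, mul_one]
  refine le_trans ?_ (le_max_left _ _)
  rcases not_and_or.1 hmid with hlt | hgt
  · refine h₂ _ (semicircle_im_pos ht) ((norm_semicircle_sub_neg_one_le t).trans ?_)
    rw [abs_of_pos ht.1]
    linarith
  · refine h₁ _ (semicircle_im_pos ht) ((norm_semicircle_sub_one_le t).trans ?_)
    rw [abs_of_pos (sub_pos.2 ht.2)]
    linarith

lemma semicircleIntegral_eq_sub_of_hasDerivAt {F f : ℂ → ℂ}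
    (hF : ∀ w : ℂ, 0 < w.im → HasDerivAt F (f w) w)
    (hF₁ : ContinuousWithinAt F {z | 0 ≤ z.im} 1)
    (hF₂ : ContinuousWithinAt F {z | 0 ≤ z.im} (-1))
    (hint : IntervalIntegrable (fun t => f (semicircle t) * (-I * semicircle t)) volume 0 π) :
    semicircleIntegral f = F 1 - F (-1) := by
  have hmaps : MapsTo semicircle (Icc 0 π) {z | 0 ≤ z.im} := fun t ht => by
    show 0 ≤ (semicircle t).im
    rw [semicircle_im]
    exact Real.sin_nonneg_of_nonneg_of_le_pi ht.1 ht.2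
  have hcont : ContinuousOn (F ∘ semicircle) (Icc 0 π) := by
    intro t ht
    refine ContinuousWithinAt.comp ?_ continuous_semicircle.continuousWithinAt hmaps
    rcases eq_endpoints_or_mem_Ioo_of_mem_Icc ht with rfl | rfl | ht'
    · rwa [semicircle_zero]
    · rwa [semicircle_pi]
    · exact (hF _ (semicircle_im_pos ht')).continuousAt.continuousWithinAt
  have hFTC := intervalIntegral.integral_eq_sub_of_hasDerivAt_of_le pi_pos.le hcont
    (fun t ht => (hF _ (semicircle_im_pos ht)).comp t (hasDerivAt_semicircle t)) hint
  rw [Function.comp_apply, Function.comp_apply, semicircle_pi, semicircle_zero] at hFTC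
  exact hFTC

theorem HasExpDecay.semicircleIntegral_eq {f : ℂ → ℂ} {a : ℝ} (hf : HasExpDecay a f)
    (ha : 0 < a) (hd : DifferentiableOn ℂ f {z | 0 < z.im}) {r C : ℝ} (hr : 0 < r)
    (h₁ : ∀ z : ℂ, 0 < z.im → ‖z - 1‖ ≤ r → ‖f z‖ ≤ C)
    (h₂ : ∀ z : ℂ, 0 < z.im → ‖z - -1‖ ≤ r → ‖f z‖ ≤ C) :
    semicircleIntegral f = -I * (verticalIntegral f 1 - verticalIntegral f (-1)) := by
  rw [mul_sub]
  refine semicircleIntegral_eq_sub_of_hasDerivAt (F := fun w => -I * verticalIntegral f w)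
    (fun w hw => ?_) ?_ ?_ (intervalIntegrable_semicircle hd.continuousOn hr h₁ h₂)
  · exact ((hf.hasDerivAt_verticalIntegral ha hd hw).const_mul (-I)).congr_deriv
      (by linear_combination (-f w) * I_sq)
  · exact continuousWithinAt_const.mul
      (hf.continuousWithinAt_verticalIntegral ha hd.continuousOn (by simp) hr h₁)
  · exact continuousWithinAt_const.mul
      (hf.continuousWithinAt_verticalIntegral ha hd.continuousOn (by simp) hr h₂)

lemma hasExpDecay_of_expansion {g : ℂ → ℂ} {m : ℕ} {c : ℕ → ℂ}
    (hsum : ∀ z : ℂ, 0 < z.im → Summable (fun n : ℕ => ‖c n * cexp (π * I * n * z)‖))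
    (hexp : ∀ z : ℂ, 0 < z.im →
      g z = cexp (-(π : ℂ) * I * m * z) + ∑' n : ℕ, c n * cexp (π * I * n * z)) :
    HasExpDecay (-(π * m)) g := by
  intro σ hσ
  have hterm (n : ℕ) (w : ℂ) :
      ‖c n * cexp (π * I * n * w)‖ = ‖c n‖ * rexp (-(π * n * w.im)) := by
    rw [norm_mul, show (π : ℂ) * I * n * w = ((π * n : ℝ) : ℂ) * I * w by push_cast; ring,
      norm_cexp_ofReal_mul_I_mul]
  set S := ∑' n : ℕ, ‖c n * cexp (π * I * n * (σ * I))‖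
  refine ⟨1 + S, by positivity, fun z hz => ?_⟩
  have hz0 : 0 < z.im := hσ.trans_le hz
  have hS : ∑' n : ℕ, ‖c n * cexp (π * I * n * z)‖ ≤ S := by
    refine (hsum z hz0).tsum_le_tsum (fun n => ?_) (hsum _ (by simpa using hσ))
    rw [hterm, hterm, mul_I_im, ofReal_re]
    gcongr
  have hprincipal : ‖cexp (-(π : ℂ) * I * m * z)‖ = rexp (-(-(π * m) * z.im)) := by
    rw [show -(π : ℂ) * I * m * z = ((-(π * m) : ℝ) : ℂ) * I * z by push_cast; ring,
      norm_cexp_ofReal_mul_I_mul]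
  have hone : 1 ≤ rexp (-(-(π * m) * z.im)) := Real.one_le_exp (by
    rw [neg_mul, neg_neg]; positivity)
  rw [hexp z hz0]
  calc _ ≤ ‖cexp (-(π : ℂ) * I * m * z)‖ + ∑' n : ℕ, ‖c n * cexp (π * I * n * z)‖ :=
        (norm_add_le _ _).trans (add_le_add_right (norm_tsum_le_tsum_norm (hsum z hz0)) _)
    _ ≤ rexp (-(-(π * m) * z.im)) + S * rexp (-(-(π * m) * z.im)) := by
        rw [hprincipal]
        gcongr
        exact hS.trans (le_mul_of_one_le_right (by positivity) hone)
    _ = (1 + S) * rexp (-(-(π * m) * z.im)) := by ring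

lemma norm_mul_cexp_le (w : ℂ) {b : ℝ} (hb : 0 ≤ b) {z : ℂ} (hz : 0 ≤ z.im) :
    ‖w * cexp (b * I * z)‖ ≤ ‖w‖ := by
  rw [norm_mul, norm_cexp_ofReal_mul_I_mul]
  exact mul_le_of_le_one_right (norm_nonneg w) (Real.exp_le_one_iff.2 (by
    rw [neg_nonpos]; positivity))

lemma cexp_mul_I_mul_one_add_ofReal_mul_I (b : ℂ) (s : ℝ) :
    cexp (b * I * (1 + s * I)) = cexp (b * I) * cexp (-b * s) := by
  rw [← Complex.exp_add]
  congr 1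
  linear_combination (b * s) * I_sq

lemma verticalIntegral_mul_cexp_one (g : ℂ → ℂ) (b : ℂ) :
    verticalIntegral (fun z => g z * cexp (b * I * z)) 1 =
      cexp (b * I) * ∫ s in Ioi (0 : ℝ), g (1 + s * I) * cexp (-b * s) := by
  rw [verticalIntegral, ← integral_const_mul]
  congr 1 with s
  rw [cexp_mul_I_mul_one_add_ofReal_mul_I]
  ring

lemma verticalIntegral_neg_one_of_periodic {g : ℂ → ℂ}
    (hper : ∀ z : ℂ, 0 < z.im → g (z + 2) = g z) (b : ℂ) :
    verticalIntegral (fun z => g z * cexp (b * I * z)) (-1) =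
      cexp (-(2 * b * I)) * verticalIntegral (fun z => g z * cexp (b * I * z)) 1 := by
  rw [verticalIntegral, verticalIntegral, ← integral_const_mul]
  refine setIntegral_congr_fun measurableSet_Ioi fun s (hs : 0 < s) => ?_
  rw [← hper _ (by simpa using hs), show -1 + s * I + 2 = 1 + s * I by ring, mul_left_comm,
    ← Complex.exp_add]
  congr 2
  ring

theorem HasExpDecay.integrableOn_ray_one_mul_cexp {g : ℂ → ℂ} {a b : ℝ}
    (hg : HasExpDecay a g) (hab : 0 < a + b) (hb : 0 ≤ b)
    (hc : ContinuousOn g {z | 0 < z.im}) {r C : ℝ} (hr : 0 < r)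
    (h₁ : ∀ z : ℂ, 0 < z.im → ‖z - 1‖ ≤ r → ‖g z‖ ≤ C) :
    IntegrableOn (fun t : ℝ => g (1 + t * I) * cexp (-b * t)) (Ioi 0) := by
  have hray : IntegrableOn (fun s : ℝ => g (1 + s * I) * cexp (b * I * (1 + s * I))) (Ioi 0) :=
    (hg.mul_cexp b).integrableOn_ray_of_cusp hab (hc.mul (by fun_prop)) (by simp) hr
      fun z hz hnear => (norm_mul_cexp_le _ hb hz.le).trans (h₁ z hz hnear)
  refine IntegrableOn.congr_fun (hray.const_mul (cexp (-(b * I)))) (fun s _ => ?_)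
    measurableSet_Ioi
  have hcancel : cexp (-(b * I)) * cexp (b * I) = 1 := by
    rw [← Complex.exp_add, neg_add_cancel, Complex.exp_zero]
  rw [cexp_mul_I_mul_one_add_ofReal_mul_I]
  linear_combination (g (1 + s * I) * cexp (-b * s)) * hcancel

theorem HasExpDecay.semicircleIntegral_mul_cexp {g : ℂ → ℂ} {a b : ℝ}
    (hg : HasExpDecay a g) (hab : 0 < a + b) (hb : 0 ≤ b)
    (hd : DifferentiableOn ℂ g {z | 0 < z.im}) (hper : ∀ z : ℂ, 0 < z.im → g (z + 2) = g z)
    {r C : ℝ} (hr : 0 < r) (h₁ : ∀ z : ℂ, 0 < z.im → ‖z - 1‖ ≤ r → ‖g z‖ ≤ C)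
    (h₂ : ∀ z : ℂ, 0 < z.im → ‖z - -1‖ ≤ r → ‖g z‖ ≤ C) :
    semicircleIntegral (fun z => g z * cexp (b * I * z)) =
      2 * Real.sin b * ∫ t in Ioi (0 : ℝ), g (1 + t * I) * cexp (-b * t) := by
  rw [(hg.mul_cexp b).semicircleIntegral_eq hab (hd.mul (by fun_prop)) hr
      (fun z hz hnear => (norm_mul_cexp_le _ hb hz.le).trans (h₁ z hz hnear))
      (fun z hz hnear => (norm_mul_cexp_le _ hb hz.le).trans (h₂ z hz hnear)),
    verticalIntegral_neg_one_of_periodic hper, verticalIntegral_mul_cexp_one, ofReal_sin]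
  have hphase : cexp (-(2 * b * I)) * cexp (b * I) = cexp (-b * I) := by
    rw [← Complex.exp_add]
    ring_nf
  linear_combination (I * ∫ t in Ioi (0 : ℝ), g (1 + t * I) * cexp (-b * t)) * hphase -
    (∫ t in Ioi (0 : ℝ), g (1 + t * I) * cexp (-b * t)) * two_sin (x := (b : ℂ))

/-- For a `2`-periodic holomorphic `g` on the upper half-plane with absolutely convergent
expansion `g(z) = e^{-iπmz} + ∑_{n≥0} c_n e^{iπnz}` and exponential decay near the cusps `±1`,
and every real `x` with `x² > m`, one has
`(1/2)∫_γ g(z) e^{iπx²z} dz = sin(πx²) ∫_0^∞ g(1+it) e^{-πx²t} dt`, where the right-hand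
integral converges absolutely. -/
theorem statement17 (m : ℕ) (g : ℂ → ℂ)
    (hol : DifferentiableOn ℂ g {z : ℂ | 0 < z.im})
    (hper : ∀ z : ℂ, 0 < z.im → g (z + 2) = g z)
    (c : ℕ → ℂ)
    (hsum : ∀ z : ℂ, 0 < z.im →
      Summable (fun n : ℕ => ‖c n * Complex.exp (Real.pi * Complex.I * n * z)‖))
    (hexp : ∀ z : ℂ, 0 < z.im →
      g z = Complex.exp (-(Real.pi : ℂ) * Complex.I * m * z) +
        ∑' n : ℕ, c n * Complex.exp (Real.pi * Complex.I * n * z))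
    (C c' : ℝ) (hC : 0 < C) (hc' : 0 < c')
    (hdecay : ∀ z : ℂ, 0 < z.im →
      (‖z - 1‖ ≤ 1 / 2 ∨ ‖z + 1‖ ≤ 1 / 2) →
      ‖g z‖ ≤ C * Real.exp (-c' / z.im)) :
    ∀ x : ℝ, (m : ℝ) < x ^ 2 →
      IntegrableOn (fun t : ℝ => g (1 + t * Complex.I) *
        Complex.exp (-(Real.pi : ℂ) * (x : ℂ) ^ 2 * t)) (Set.Ioi 0) ∧
      (1 / 2) * semicircleIntegral
          (fun z => g z * Complex.exp (Real.pi * Complex.I * (x : ℂ) ^ 2 * z)) =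
        ((Real.sin (Real.pi * x ^ 2) : ℝ) : ℂ) *
          ∫ t in Set.Ioi (0 : ℝ), g (1 + t * Complex.I) *
            Complex.exp (-(Real.pi : ℂ) * (x : ℂ) ^ 2 * t) := by
  intro x hx
  have hbdd (z : ℂ) (hz : 0 < z.im) (hnear : ‖z - 1‖ ≤ 1 / 2 ∨ ‖z + 1‖ ≤ 1 / 2) : ‖g z‖ ≤ C :=
    (hdecay z hz hnear).trans (mul_le_of_le_one_right hC.le (Real.exp_le_one_iff.2 (by
      rw [neg_div, neg_nonpos]; exact (div_pos hc' hz).le)))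
  have hg := hasExpDecay_of_expansion hsum hexp
  have hab : 0 < -(π * m) + π * x ^ 2 := by nlinarith [pi_pos]
  have hr : (0 : ℝ) < 1 / 2 := one_half_pos
  have h₁ (z : ℂ) (hz : 0 < z.im) (hnear : ‖z - 1‖ ≤ 1 / 2) := hbdd z hz (.inl hnear)
  have h₂ (z : ℂ) (hz : 0 < z.im) (hnear : ‖z - -1‖ ≤ 1 / 2) :=
    hbdd z hz (.inr (by rwa [sub_neg_eq_add] at hnear))
  have hphase (z : ℂ) : (π : ℂ) * I * x ^ 2 * z = ((π * x ^ 2 : ℝ) : ℂ) * I * z := by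
    push_cast; ring
  have hdamp (t : ℝ) : -(π : ℂ) * x ^ 2 * t = -((π * x ^ 2 : ℝ) : ℂ) * t := by
    push_cast; ring
  simp only [hphase, hdamp]
  refine ⟨hg.integrableOn_ray_one_mul_cexp hab (by positivity) hol.continuousOn hr h₁, ?_⟩
  rw [hg.semicircleIntegral_mul_cexp hab (by positivity) hol hper hr h₁ h₂]
  ring
end
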